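/- With ω± as above, for all (x,y) ∈ R_a \ {(2,0)} with 0 < a ≤ 1/10, |∂ω±/∂y| < 7/3, and for y ≠ 0, sign(∂ω₊/∂y) = sign(y) and sign(∂ω₋/∂y) = −sign(y). -/

import Mathlib

/-!
Differentiating gives `∂ω±/∂y = c · ((4 - x²)√Δ ± P)` with `c = 4x²y / (r₁⁴ √Δ)` and
`P = (2x² + 8 + 16x²y²) r₁² - Δ = 16 + 24x² + x⁴ + 32x²y² + 8x⁴y² ≥ 16`. On `R_{1/10} ⊇ R_a` the
term `(4 - x²)√Δ` is at most `41/200` in absolute value, so the bracket has the sign `±` and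
modulus at most `142`; and `Δ ≥ 400 y²` gives `√Δ ≥ 20|y|`, which keeps `|c| ≤ 1/64` uniformly,
even as `(x, y) → (2, 0)`. Hence `|∂ω±/∂y| ≤ 142/64 < 7/3`, and `sign c = sign y`.
-/

noncomputable def Delta (x y : ℝ) : ℝ := ((x+2)^2 + 8*x^2*y^2) * ((x-2)^2 + 8*x^2*y^2)
noncomputable def r1sq (x y : ℝ) : ℝ := 4 + x^2 + 4*x^2*y^2

noncomputable def omegaP (x y : ℝ) : ℝ := (-4 + x^2 + Real.sqrt (Delta x y)) / (2 * r1sq x y)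
noncomputable def omegaM (x y : ℝ) : ℝ := (-4 + x^2 - Real.sqrt (Delta x y)) / (2 * r1sq x y)

lemma Real.sign_mul_of_pos_right {c b : ℝ} (hb : 0 < b) : Real.sign (c * b) = Real.sign c := by
  rcases lt_trichotomy c 0 with hc | rfl | hc
  · rw [Real.sign_of_neg hc, Real.sign_of_neg (mul_neg_of_neg_of_pos hc hb)]
  · rw [zero_mul]
  · rw [Real.sign_of_pos hc, Real.sign_of_pos (mul_pos hc hb)]

lemma Real.sign_mul_of_neg_right {c b : ℝ} (hb : b < 0) : Real.sign (c * b) = -Real.sign c := by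
  rw [← neg_neg (c * b), ← mul_neg, Real.sign_neg, Real.sign_mul_of_pos_right (neg_pos.2 hb)]

noncomputable def omega (ε x y : ℝ) : ℝ := (-4 + x^2 + ε * √(Delta x y)) / (2 * r1sq x y)

lemma omega_one : omega 1 = omegaP := by
  funext x y; simp only [omega, omegaP, one_mul]

lemma omega_neg_one : omega (-1) = omegaM := by
  funext x y; simp only [omega, omegaM, neg_one_mul, ← sub_eq_add_neg]

def omegaDerivPoly (x y : ℝ) : ℝ := 16 + 24*x^2 + x^4 + 32*x^2*y^2 + 8*x^4*y^2

noncomputable def omegaDerivCoeff (x y : ℝ) : ℝ := 4*x^2*y / (r1sq x y ^ 2 * √(Delta x y))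

lemma r1sq_pos (x y : ℝ) : 0 < r1sq x y := by
  unfold r1sq; positivity

lemma hasDerivAt_r1sq (x y : ℝ) : HasDerivAt (r1sq x) (8*x^2*y) y :=
  (((hasDerivAt_pow 2 y).const_mul (4*x^2)).const_add (4 + x^2)).congr_deriv (by push_cast; ring)

lemma hasDerivAt_Delta (x y : ℝ) :
    HasDerivAt (Delta x) (16*x^2*y*(2*x^2 + 8 + 16*x^2*y^2)) y := by
  have factor (c : ℝ) : HasDerivAt (fun t => c + 8*x^2*t^2) (16*x^2*y) y :=
    (((hasDerivAt_pow 2 y).const_mul (8*x^2)).const_add c).congr_deriv (by push_cast; ring)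
  exact ((factor ((x+2)^2)).mul (factor ((x-2)^2))).congr_deriv (by ring)

lemma mul_r1sq_sub_Delta (x y : ℝ) :
    (2*x^2 + 8 + 16*x^2*y^2) * r1sq x y - Delta x y = omegaDerivPoly x y := by
  unfold r1sq Delta omegaDerivPoly; ring

lemma hasDerivAt_omega (ε x y : ℝ) (hΔ : 0 < Delta x y) :
    HasDerivAt (omega ε x)
      (omegaDerivCoeff x y * ((4 - x^2) * √(Delta x y) + ε * omegaDerivPoly x y)) y := by
  have hnum := (((hasDerivAt_Delta x y).sqrt hΔ.ne').const_mul ε).const_add (-4 + x^2)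
  have hden := (hasDerivAt_r1sq x y).const_mul 2
  have hr := r1sq_pos x y
  have hs := Real.sqrt_pos.2 hΔ
  refine (hnum.div hden (by positivity)).congr_deriv ?_
  rw [omegaDerivCoeff, ← mul_r1sq_sub_Delta]
  field_simp
  linear_combination (-16 * x^2 * y * ε) * Real.sq_sqrt hΔ.le

lemma sixteen_le_omegaDerivPoly (x y : ℝ) : 16 ≤ omegaDerivPoly x y := by
  unfold omegaDerivPoly
  nlinarith [sq_nonneg x, sq_nonneg (x^2), sq_nonneg (x*y), sq_nonneg (x^2*y)]

lemma Delta_pos {x : ℝ} (y : ℝ) (hx : 0 < x) (hp : (x, y) ≠ (2, 0)) : 0 < Delta x y := by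
  have hB : 0 < (x-2)^2 + 8*x^2*y^2 := by
    rcases eq_or_ne y 0 with rfl | hy
    · have : x - 2 ≠ 0 := sub_ne_zero.2 fun h => hp (by rw [h])
      positivity
    · positivity
  unfold Delta
  exact mul_pos (by positivity) hB

lemma sign_omegaDerivCoeff {x : ℝ} (y : ℝ) (hx : x ≠ 0) (hΔ : 0 < Delta x y) :
    Real.sign (omegaDerivCoeff x y) = Real.sign y := by
  have hr := r1sq_pos x y
  have hs := Real.sqrt_pos.2 hΔ
  rw [omegaDerivCoeff, mul_comm, mul_div_assoc]
  exact Real.sign_mul_of_pos_right (by positivity)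

lemma four_hundred_mul_sq_le_Delta {x : ℝ} (y : ℝ) (hx : 19/10 ≤ x) :
    400 * y^2 ≤ Delta x y := by
  have h : 400 ≤ 8*x^2*(x+2)^2 := by
    have h1 : 361/100 ≤ x^2 := by nlinarith
    have h2 : 1521/100 ≤ (x+2)^2 := by nlinarith
    nlinarith [mul_le_mul h1 h2 (by norm_num) (by positivity)]
  unfold Delta
  nlinarith [mul_le_mul_of_nonneg_right h (sq_nonneg y), sq_nonneg (x*y), sq_nonneg (x-2),
    sq_nonneg (x*y*(x-2)), sq_nonneg (x*x*y*y)]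

lemma twenty_mul_abs_le_sqrt_Delta {x : ℝ} (y : ℝ) (hx : 19/10 ≤ x) :
    20 * |y| ≤ √(Delta x y) := by
  have h := four_hundred_mul_sq_le_Delta y hx
  rw [Real.le_sqrt (by positivity) (by nlinarith), mul_pow, sq_abs]
  linarith

lemma sq_mem_of_abs_sub_two_le {x : ℝ} (hx : |x - 2| ≤ 1/10) :
    361/100 ≤ x^2 ∧ x^2 ≤ 441/100 := by
  obtain ⟨h1, h2⟩ := abs_le.1 hx
  constructor <;> nlinarith

lemma fifty_seven_le_r1sq_sq {x : ℝ} (hx : |x - 2| ≤ 1/10) (y : ℝ) : 57 ≤ r1sq x y ^ 2 := by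
  have h : 761/100 ≤ r1sq x y := by
    unfold r1sq; nlinarith [sq_mem_of_abs_sub_two_le hx, sq_nonneg (x*y)]
  nlinarith

lemma abs_omegaDerivCoeff_le {x : ℝ} (hx : |x - 2| ≤ 1/10) (y : ℝ) :
    |omegaDerivCoeff x y| ≤ 1/64 := by
  have hx' : 19/10 ≤ x := by linarith [(abs_le.1 hx).1]
  rw [omegaDerivCoeff, abs_div, abs_of_nonneg (by positivity : 0 ≤ r1sq x y ^ 2 * √(Delta x y)),
    abs_mul,
    abs_of_nonneg (by positivity : (0:ℝ) ≤ 4*x^2)]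
  refine div_le_of_le_mul₀ (by positivity) (by norm_num) ?_
  have h := mul_le_mul (fifty_seven_le_r1sq_sq hx y) (twenty_mul_abs_le_sqrt_Delta y hx')
    (by positivity) (by positivity)
  nlinarith [(sq_mem_of_abs_sub_two_le hx).2, abs_nonneg y]

lemma sqrt_Delta_le {x y : ℝ} (hx : |x - 2| ≤ 1/10) (hy : |y| ≤ 1/100) :
    √(Delta x y) ≤ 1/2 := by
  obtain ⟨hx1, hx2⟩ := abs_le.1 hx
  have hy2 : y^2 ≤ 1/10000 := by nlinarith [sq_abs y, abs_nonneg y]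
  have hxy : x^2*y^2 ≤ 441/1000000 := by
    nlinarith [sq_mem_of_abs_sub_two_le hx, sq_nonneg y]
  have hA : (x+2)^2 + 8*x^2*y^2 ≤ 17 := by nlinarith
  have hB : (x-2)^2 + 8*x^2*y^2 ≤ 7/500 := by nlinarith
  rw [Real.sqrt_le_left (by norm_num)]
  unfold Delta
  nlinarith [mul_le_mul hA hB (by positivity) (by norm_num)]

lemma abs_four_sub_sq_mul_sqrt_Delta_le {x y : ℝ} (hx : |x - 2| ≤ 1/10) (hy : |y| ≤ 1/100) :
    |(4 - x^2) * √(Delta x y)| ≤ 41/200 := by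
  have h : |4 - x^2| ≤ 41/100 := by
    obtain ⟨h1, h2⟩ := sq_mem_of_abs_sub_two_le hx
    exact abs_le.2 ⟨by linarith, by linarith⟩
  rw [abs_mul, abs_of_nonneg (Real.sqrt_nonneg _)]
  calc |4 - x^2| * √(Delta x y) ≤ 41/100 * (1/2) :=
        mul_le_mul h (sqrt_Delta_le hx hy) (Real.sqrt_nonneg _) (by norm_num)
    _ = 41/200 := by norm_num

lemma omegaDerivPoly_le {x y : ℝ} (hx : |x - 2| ≤ 1/10) (hy : |y| ≤ 1/100) :
    omegaDerivPoly x y ≤ 1415/10 := by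
  obtain ⟨h1, h2⟩ := sq_mem_of_abs_sub_two_le hx
  have hy2 : y^2 ≤ 1/10000 := by nlinarith [sq_abs y, abs_nonneg y]
  have hx4 : x^4 ≤ 1945/100 := by nlinarith
  unfold omegaDerivPoly
  nlinarith [mul_le_mul_of_nonneg_left hy2 (sq_nonneg x),
    mul_le_mul_of_nonneg_left hy2 (pow_nonneg (sq_nonneg x) 2)]

theorem stmt_13_general (a : ℝ) (ha : a ≤ 1/10) (x y : ℝ)
    (hx : 2 - a ≤ x ∧ x ≤ 2 + a) (hy : |y| ≤ a/10) (hp : (x, y) ≠ (2, 0)) :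
    |deriv (fun t => omegaP x t) y| < 7/3 ∧
    |deriv (fun t => omegaM x t) y| < 7/3 ∧
    (y ≠ 0 →
      Real.sign (deriv (fun t => omegaP x t) y) = Real.sign y ∧
      Real.sign (deriv (fun t => omegaM x t) y) = -Real.sign y) := by
  have hx' : |x - 2| ≤ 1/10 := abs_le.2 ⟨by linarith, by linarith⟩
  have hy' : |y| ≤ 1/100 := by linarith
  have hΔ := Delta_pos y (by linarith) hp
  rw [← omega_one, ← omega_neg_one, (hasDerivAt_omega 1 x y hΔ).deriv,
    (hasDerivAt_omega (-1) x y hΔ).deriv]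
  have hS := abs_le.1 (abs_four_sub_sq_mul_sqrt_Delta_le hx' hy')
  have hP := omegaDerivPoly_le hx' hy'
  have hP16 := sixteen_le_omegaDerivPoly x y
  have bound (b : ℝ) (hb : |b| ≤ 142) : |omegaDerivCoeff x y * b| < 7/3 := by
    rw [abs_mul]
    nlinarith [mul_le_mul (abs_omegaDerivCoeff_le hx' y) hb (abs_nonneg b) (by norm_num)]
  refine ⟨bound _ (abs_le.2 ⟨by linarith, by linarith⟩),
    bound _ (abs_le.2 ⟨by linarith, by linarith⟩), fun _ => ⟨?_, ?_⟩⟩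
  · rw [Real.sign_mul_of_pos_right (by linarith), sign_omegaDerivCoeff y (by linarith) hΔ]
  · rw [Real.sign_mul_of_neg_right (by linarith), sign_omegaDerivCoeff y (by linarith) hΔ]

theorem stmt_13 (a : ℝ) (ha0 : 0 < a) (ha : a ≤ 1/10) (x y : ℝ)
    (hx : 2 - a ≤ x ∧ x ≤ 2 + a) (hy : |y| ≤ a/10) (hp : (x, y) ≠ (2, 0)) :
    |deriv (fun t => omegaP x t) y| < 7/3 ∧
    |deriv (fun t => omegaM x t) y| < 7/3 ∧
    (y ≠ 0 →
      Real.sign (deriv (fun t => omegaP x t) y) = Real.sign y ∧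
      Real.sign (deriv (fun t => omegaM x t) y) = -Real.sign y) :=
  stmt_13_general a ha x y hx hy hp
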